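/- (Geometric error bound for value iteration.) Let the game have p game elements, stage payoff matrices a^k, and transition probabilities q^{kl}_{ij} ≥ 0 with Σ_{l=1}^p q^{kl}_{ij} ≤ β for all k, i, j, where 0 ≤ β < 1; let v ∈ ℝ^p be the unique vector with v_k = val(B_k(v)) for all k, and let v^0 = 0, v^{r+1}_k = val(B_k(v^r)) be the value iteration. Then for every r ≥ 0, max_k |v^r_k − v_k| ≤ (β^r / (1 − β)) · max_k |v^1_k|, so the iterates converge geometrically to the value vector. -/

import Mathlib

open scoped BigOperators

/-- Expected payoff to player 1 in the matrix game `B` when player 1 uses the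
mixed strategy `y` and player 2 uses the mixed strategy `z`. -/
noncomputable def expectedPayoff {m n : ℕ} (B : Matrix (Fin m) (Fin n) ℝ)
    (y : Fin m → ℝ) (z : Fin n → ℝ) : ℝ :=
  ∑ i, ∑ j, y i * B i j * z j

/-- The value (in mixed strategies) of the zero-sum matrix game `B`:
`val(B) = sup_{y ∈ Δ_m} inf_{z ∈ Δ_n} ∑_{i,j} y_i B_{ij} z_j`. -/
noncomputable def matrixGameValue {m n : ℕ} (B : Matrix (Fin m) (Fin n) ℝ) : ℝ :=
  ⨆ y : stdSimplex ℝ (Fin m), ⨅ z : stdSimplex ℝ (Fin n), expectedPayoff B y z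

/-- The auxiliary matrix `B_k(v)` of a stochastic game, with entries
`b^k_{ij} = a^k_{ij} + ∑_l q^{kl}_{ij} v_l`. -/
noncomputable def gameElementMatrix {p : ℕ} {m n : Fin p → ℕ}
    (a : ∀ k, Matrix (Fin (m k)) (Fin (n k)) ℝ)
    (q : ∀ k, Fin (m k) → Fin (n k) → Fin p → ℝ)
    (v : Fin p → ℝ) (k : Fin p) : Matrix (Fin (m k)) (Fin (n k)) ℝ :=
  fun i j => a k i j + ∑ l, q k i j l * v l

/-!
The value of a matrix game is monotone in the entries and commutes with adding a constant to
every entry, so it is 1-Lipschitz for the sup-norm on entries. The entries of `B_k(u)` depend on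
`u` through nonnegative weights of total mass at most `β`, so the Shapley operator
`u ↦ (val B_k(u))_k` is a `β`-contraction of `ℝ^p` with the sup-norm. Its unique fixed point is
`v`, value iteration is its orbit of `0`, and the bound is the a priori estimate of Banach's
fixed point theorem.
-/

open Set

section MatrixGame

variable {m n : ℕ}

lemma expectedPayoff_mono {B C : Matrix (Fin m) (Fin n) ℝ} {y : Fin m → ℝ} {z : Fin n → ℝ}
    (hy : ∀ i, 0 ≤ y i) (hz : ∀ j, 0 ≤ z j) (h : ∀ i j, B i j ≤ C i j) :
    expectedPayoff B y z ≤ expectedPayoff C y z :=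
  Finset.sum_le_sum fun i _ => Finset.sum_le_sum fun j _ =>
    mul_le_mul_of_nonneg_right (mul_le_mul_of_nonneg_left (h i j) (hy i)) (hz j)

lemma expectedPayoff_add (B C : Matrix (Fin m) (Fin n) ℝ) (y : Fin m → ℝ) (z : Fin n → ℝ) :
    expectedPayoff (B + C) y z = expectedPayoff B y z + expectedPayoff C y z := by
  simp only [expectedPayoff, Matrix.add_apply, mul_add, add_mul, Finset.sum_add_distrib]

lemma expectedPayoff_const {y : Fin m → ℝ} {z : Fin n → ℝ} (hy : ∑ i, y i = 1)
    (hz : ∑ j, z j = 1) (c : ℝ) : expectedPayoff (Matrix.of fun _ _ => c) y z = c := by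
  simp only [expectedPayoff, Matrix.of_apply, ← Finset.mul_sum, hz, mul_one, ← Finset.sum_mul,
    hy, one_mul]

lemma bddBelow_range_expectedPayoff (B : Matrix (Fin m) (Fin n) ℝ) (y : stdSimplex ℝ (Fin m)) :
    BddBelow (range fun z : stdSimplex ℝ (Fin n) => expectedPayoff B y z) := by
  obtain ⟨c, hc⟩ := Finite.bddBelow_range (Function.uncurry B)
  refine ⟨c, forall_mem_range.2 fun z => ?_⟩
  calc c = expectedPayoff (Matrix.of fun _ _ => c) y z := (expectedPayoff_const y.2.2 z.2.2 c).symm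
    _ ≤ expectedPayoff B y z :=
      expectedPayoff_mono y.2.1 z.2.1 fun i j => hc (mem_range_self (i, j))

lemma bddAbove_range_iInf_expectedPayoff [NeZero n] (B : Matrix (Fin m) (Fin n) ℝ) :
    BddAbove (range fun y : stdSimplex ℝ (Fin m) =>
      ⨅ z : stdSimplex ℝ (Fin n), expectedPayoff B y z) := by
  obtain ⟨c, hc⟩ := Finite.bddAbove_range (Function.uncurry B)
  obtain ⟨z₀⟩ : Nonempty (stdSimplex ℝ (Fin n)) := inferInstance
  refine ⟨c, forall_mem_range.2 fun y => ?_⟩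
  calc (⨅ z : stdSimplex ℝ (Fin n), expectedPayoff B y z) ≤ expectedPayoff B y z₀ :=
        ciInf_le (bddBelow_range_expectedPayoff B y) z₀
    _ ≤ expectedPayoff (Matrix.of fun _ _ => c) y z₀ :=
        expectedPayoff_mono y.2.1 z₀.2.1 fun i j => hc (mem_range_self (i, j))
    _ = c := expectedPayoff_const y.2.2 z₀.2.2 c

variable [NeZero n]

lemma matrixGameValue_mono {B C : Matrix (Fin m) (Fin n) ℝ} (h : ∀ i j, B i j ≤ C i j) :
    matrixGameValue B ≤ matrixGameValue C :=
  ciSup_mono (bddAbove_range_iInf_expectedPayoff C) fun y =>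
    ciInf_mono (bddBelow_range_expectedPayoff B y) fun z => expectedPayoff_mono y.2.1 z.2.1 h

variable [NeZero m]

lemma matrixGameValue_add_const (B : Matrix (Fin m) (Fin n) ℝ) (c : ℝ) :
    matrixGameValue (B + Matrix.of fun _ _ => c) = matrixGameValue B + c := by
  have hpayoff : ∀ (y : stdSimplex ℝ (Fin m)) (z : stdSimplex ℝ (Fin n)),
      expectedPayoff (B + Matrix.of fun _ _ => c) y z = expectedPayoff B y z + c := fun y z => by
    rw [expectedPayoff_add]
    exact congrArg _ (expectedPayoff_const y.2.2 z.2.2 c)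
  simp only [matrixGameValue, hpayoff, ← ciInf_add (bddBelow_range_expectedPayoff B _),
    ciSup_add (bddAbove_range_iInf_expectedPayoff B)]

lemma abs_matrixGameValue_sub_le {B C : Matrix (Fin m) (Fin n) ℝ} {c : ℝ}
    (h : ∀ i j, |B i j - C i j| ≤ c) : |matrixGameValue B - matrixGameValue C| ≤ c := by
  have hle : ∀ {B C : Matrix (Fin m) (Fin n) ℝ}, (∀ i j, |B i j - C i j| ≤ c) →
      matrixGameValue B ≤ matrixGameValue C + c := fun {B C} h => by
    rw [← matrixGameValue_add_const]
    exact matrixGameValue_mono fun i j => by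
      simp only [Matrix.add_apply, Matrix.of_apply]
      linarith [(abs_le.1 (h i j)).2]
  rw [abs_sub_le_iff]
  constructor <;> linarith [hle h, hle fun i j => abs_sub_comm (C i j) (B i j) ▸ h i j]

end MatrixGame

lemma dist_pi_eq_iSup_abs_sub {ι : Type*} [Fintype ι] (u u' : ι → ℝ) :
    dist u u' = ⨆ k, |u k - u' k| :=
  le_antisymm
    ((dist_pi_le_iff (Real.iSup_nonneg fun _ => abs_nonneg _)).2 fun k =>
      le_ciSup (Finite.bddAbove_range fun k => |u k - u' k|) k)
    (Real.iSup_le (fun k => dist_le_pi_dist u u' k) dist_nonneg)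

section StochasticGame

variable {p : ℕ} {m n : Fin p → ℕ} (a : ∀ k, Matrix (Fin (m k)) (Fin (n k)) ℝ)
  (q : ∀ k, Fin (m k) → Fin (n k) → Fin p → ℝ)

noncomputable def shapleyOperator (u : Fin p → ℝ) : Fin p → ℝ :=
  fun k => matrixGameValue (gameElementMatrix a q u k)

lemma abs_gameElementMatrix_sub_le {β : ℝ} {k : Fin p} {i : Fin (m k)} {j : Fin (n k)}
    (hq : ∀ l, 0 ≤ q k i j l) (hqβ : ∑ l, q k i j l ≤ β) (u u' : Fin p → ℝ) :
    |gameElementMatrix a q u k i j - gameElementMatrix a q u' k i j| ≤ β * dist u u' := by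
  have hsub : gameElementMatrix a q u k i j - gameElementMatrix a q u' k i j =
      ∑ l, q k i j l * (u l - u' l) := by
    simp only [gameElementMatrix, mul_sub, Finset.sum_sub_distrib]
    ring
  rw [hsub]
  calc |∑ l, q k i j l * (u l - u' l)| ≤ ∑ l, |q k i j l * (u l - u' l)| :=
        Finset.abs_sum_le_sum_abs _ _
    _ ≤ ∑ l, q k i j l * dist u u' := Finset.sum_le_sum fun l _ => by
        rw [abs_mul, abs_of_nonneg (hq l), ← Real.dist_eq]
        exact mul_le_mul_of_nonneg_left (dist_le_pi_dist u u' l) (hq l)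
    _ = (∑ l, q k i j l) * dist u u' := Finset.sum_mul _ _ _ |>.symm
    _ ≤ β * dist u u' := mul_le_mul_of_nonneg_right hqβ dist_nonneg

lemma lipschitzWith_shapleyOperator (hm : ∀ k, 0 < m k) (hn : ∀ k, 0 < n k)
    (hq : ∀ k i j l, 0 ≤ q k i j l) {β : NNReal} (hqβ : ∀ k i j, ∑ l, q k i j l ≤ β) :
    LipschitzWith β (shapleyOperator a q) := by
  refine LipschitzWith.of_dist_le_mul fun u u' => (dist_pi_le_iff (by positivity)).2 fun k => ?_
  have : NeZero (m k) := ⟨(hm k).ne'⟩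
  have : NeZero (n k) := ⟨(hn k).ne'⟩
  exact abs_matrixGameValue_sub_le fun i j =>
    abs_gameElementMatrix_sub_le a q (hq k i j) (hqβ k i j) u u'

end StochasticGame

theorem stochastic_game_value_iteration_geometric_bound_general
    (p : ℕ) (m n : Fin p → ℕ)
    (hm : ∀ k, 0 < m k) (hn : ∀ k, 0 < n k)
    (a : ∀ k, Matrix (Fin (m k)) (Fin (n k)) ℝ)
    (q : ∀ k, Fin (m k) → Fin (n k) → Fin p → ℝ)
    (hq : ∀ k i j l, 0 ≤ q k i j l)
    (β : ℝ) (hβ0 : 0 ≤ β) (hβ1 : β < 1)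
    (hqβ : ∀ k i j, ∑ l, q k i j l ≤ β)
    (v : Fin p → ℝ)
    (hv : ∀ k, v k = matrixGameValue (gameElementMatrix a q v k))
    (w : ℕ → Fin p → ℝ)
    (hw0 : w 0 = fun _ => 0)
    (hwsucc : ∀ r k, w (r + 1) k = matrixGameValue (gameElementMatrix a q (w r) k)) :
    ∀ r : ℕ, (⨆ k, |w r k - v k|) ≤ (β ^ r / (1 - β)) * ⨆ k, |w 1 k| := by
  intro r
  set T := shapleyOperator a q
  have hT : ContractingWith ⟨β, hβ0⟩ T :=
    ⟨hβ1, lipschitzWith_shapleyOperator a q hm hn hq hqβ⟩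
  have hv_fixed : v = ContractingWith.fixedPoint T hT :=
    hT.fixedPoint_unique (funext fun k => (hv k).symm)
  have hw_iterate : ∀ r, w r = T^[r] 0 := by
    intro r
    induction r with
    | zero => exact hw0
    | succ r ih => rw [Function.iterate_succ_apply', ← ih]; exact funext (hwsucc r)
  have hw_one : w 1 = T 0 := hw_iterate 1
  calc (⨆ k, |w r k - v k|) = dist (T^[r] 0) (ContractingWith.fixedPoint T hT) := by
        rw [← hw_iterate, ← hv_fixed, dist_pi_eq_iSup_abs_sub]
    _ ≤ dist 0 (T 0) * β ^ r / (1 - β) := hT.apriori_dist_iterate_fixedPoint_le 0 r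
    _ = (β ^ r / (1 - β)) * ⨆ k, |w 1 k| := by
        rw [← hw_one, dist_comm, dist_pi_eq_iSup_abs_sub]
        simp only [Pi.zero_apply, sub_zero]
        ring

/-- **Geometric error bound for value iteration:** with `v` the unique fixed
point `v_k = val(B_k(v))` and iterates `w 0 = 0`,
`w (r+1) k = val(B_k(w r))`, one has
`max_k |w r k − v k| ≤ (β^r / (1 − β)) · max_k |w 1 k|` for every `r`. -/
theorem stochastic_game_value_iteration_geometric_bound
    (p : ℕ) (hp : 0 < p) (m n : Fin p → ℕ)
    (hm : ∀ k, 0 < m k) (hn : ∀ k, 0 < n k)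
    (a : ∀ k, Matrix (Fin (m k)) (Fin (n k)) ℝ)
    (q : ∀ k, Fin (m k) → Fin (n k) → Fin p → ℝ)
    (hq : ∀ k i j l, 0 ≤ q k i j l)
    (β : ℝ) (hβ0 : 0 ≤ β) (hβ1 : β < 1)
    (hqβ : ∀ k i j, ∑ l, q k i j l ≤ β)
    (v : Fin p → ℝ)
    (hv : ∀ k, v k = matrixGameValue (gameElementMatrix a q v k))
    (w : ℕ → Fin p → ℝ)
    (hw0 : w 0 = fun _ => 0)
    (hwsucc : ∀ r k, w (r + 1) k = matrixGameValue (gameElementMatrix a q (w r) k)) :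
    ∀ r : ℕ, (⨆ k, |w r k - v k|) ≤ (β ^ r / (1 - β)) * ⨆ k, |w 1 k| :=
  stochastic_game_value_iteration_geometric_bound_general p m n hm hn a q hq β hβ0 hβ1 hqβ v hv w
    hw0 hwsucc
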